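/- For every complex number z with |z| < 1 (z ≠ 0), Re(√(2/z)·sinh(√(z/2))) ≥ 5/7 and Re(√(z/2)·csch(√(z/2))) ≥ 7/9, where the functions are interpreted via their (single-valued) power series: √(2/z)·sinh(√(z/2)) = Σ_{k=0}^∞ (z/2)^k/(2k+1)! and its reciprocal accordingly. -/

import Mathlib

noncomputable def sinhSeries (z : ℂ) : ℂ := ∑' k : ℕ, (z / 2) ^ k / (Nat.factorial (2 * k + 1) : ℂ)

/-!
For `‖z‖ ≤ 1` every term of index `k ≥ 1` of the series has norm at most `2⁻ᵏ / 3!`, so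
`‖sinhSeries z - 1‖ ≤ 1/6`. A complex number within `1/6` of `1` has real part at least `5/6`,
and its reciprocal lies within `(1/6)/(5/6) = 1/5` of `1`, so has real part at least `4/5`.
-/

namespace Complex

theorem one_sub_le_re_of_norm_sub_one_le {w : ℂ} {r : ℝ} (hw : ‖w - 1‖ ≤ r) : 1 - r ≤ w.re := by
  have := neg_abs_le (w - 1).re
  have := (abs_re_le_norm (w - 1)).trans hw
  simp only [sub_re, one_re] at *
  linarith

theorem one_sub_div_le_re_one_div_of_norm_sub_one_le {w : ℂ} {r : ℝ} (hw : ‖w - 1‖ ≤ r)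
    (hr : r < 1) : 1 - r / (1 - r) ≤ (1 / w).re := by
  have hnorm : 1 - r ≤ ‖w‖ := by
    have := norm_sub_norm_le (1 : ℂ) (1 - w)
    rw [sub_sub_cancel, norm_one, norm_sub_rev] at this
    linarith
  have hw0 : w ≠ 0 := norm_pos_iff.mp (by linarith)
  apply one_sub_le_re_of_norm_sub_one_le
  calc ‖1 / w - 1‖ = ‖w - 1‖ / ‖w‖ := by
        rw [div_sub_one hw0, norm_div, norm_sub_rev]
    _ ≤ r / (1 - r) := div_le_div₀ ((norm_nonneg _).trans hw) hw (by linarith) hnorm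

end Complex

theorem norm_sinhSeries_term_le (z : ℂ) (k : ℕ) :
    ‖(z / 2) ^ k / (Nat.factorial (2 * k + 1) : ℂ)‖ ≤ ‖z / 2‖ ^ k / Nat.factorial k := by
  rw [norm_div, norm_pow, Complex.norm_natCast]
  gcongr
  omega

theorem summable_sinhSeries_term (z : ℂ) :
    Summable fun k : ℕ => (z / 2) ^ k / (Nat.factorial (2 * k + 1) : ℂ) :=
  .of_norm_bounded (Real.summable_pow_div_factorial ‖z / 2‖) (norm_sinhSeries_term_le z)

theorem sinhSeries_sub_one (z : ℂ) :
    sinhSeries z - 1 = ∑' k : ℕ, (z / 2) ^ (k + 1) / (Nat.factorial (2 * (k + 1) + 1) : ℂ) := by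
  rw [sinhSeries, (summable_sinhSeries_term z).tsum_eq_zero_add]
  simp

theorem norm_sinhSeries_sub_one_le {z : ℂ} (hz : ‖z‖ ≤ 1) : ‖sinhSeries z - 1‖ ≤ 1 / 6 := by
  have hz2 : ‖z / 2‖ ≤ 1 / 2 := by
    rw [norm_div, Complex.norm_ofNat]
    linarith
  have hgeom := hasSum_geometric_two.mul_left (1 / 12 : ℝ)
  rw [sinhSeries_sub_one]
  refine (tsum_of_norm_bounded hgeom fun k => ?_).trans_eq (by norm_num)
  have hfact : ((Nat.factorial 3 : ℕ) : ℝ) ≤ Nat.factorial (2 * (k + 1) + 1) :=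
    Nat.cast_le.mpr (Nat.factorial_le (by omega))
  rw [norm_div, norm_pow, Complex.norm_natCast]
  calc ‖z / 2‖ ^ (k + 1) / Nat.factorial (2 * (k + 1) + 1)
      ≤ (1 / 2) ^ (k + 1) / Nat.factorial 3 := by gcongr
    _ = 1 / 12 * (1 / 2) ^ k := by
      norm_num [Nat.factorial, pow_succ]
      ring

theorem sinh_re_bounds_general (z : ℂ) (hz : ‖z‖ < 1) :
    5 / 7 ≤ (sinhSeries z).re ∧ 7 / 9 ≤ (1 / sinhSeries z).re := by
  have h := norm_sinhSeries_sub_one_le hz.le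
  have hre := Complex.one_sub_le_re_of_norm_sub_one_le h
  have hinv := Complex.one_sub_div_le_re_one_div_of_norm_sub_one_le h (by norm_num)
  constructor <;> norm_num at hre hinv ⊢ <;> linarith

theorem sinh_re_bounds (z : ℂ) (hz : ‖z‖ < 1) (hz0 : z ≠ 0) :
    5 / 7 ≤ (sinhSeries z).re ∧ 7 / 9 ≤ (1 / sinhSeries z).re :=
  sinh_re_bounds_general z hz
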